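/- arXiv:2103.03495 — 5 statements merged into one kernel-verified Lean document; each statement's English description precedes it below -/
import Mathlib

section
/- Let A be a unital C*-algebra, let a ∈ A be self-adjoint, and let κ₀ > 0 be a real number such that a - κ₀·1 is positive. Then for every b ∈ A, the function μ ↦ (a + μ²·1)⁻¹ (a b - b a) (a + μ²·1)⁻¹ from [0, ∞) to A is Bochner integrable, and b · a^{-1/2} - a^{-1/2} · b = (2/π) ∫₀^∞ (a + μ²·1)⁻¹ (a b - b a) (a + μ²·1)⁻¹ dμ. -/
/-!
Since `ab - ba = u b - b u` for `u = a + μ²`, the integrand equals `b u⁻¹ - u⁻¹ b`, so everything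
reduces to `∫₀^∞ (a + μ²)⁻¹ dμ = (π/2) a^{-1/2}`. Through the continuous functional calculus this is
the scalar identity `∫₀^∞ (x + μ²)⁻¹ dμ = π / (2√x)` (an arctangent primitive) on the spectrum of
`a`, which lies in `[κ₀, ∞)`; there `(κ₀ + μ²)⁻¹` is a uniform integrable bound, which lets the
integral pass through the functional calculus.
-/

open MeasureTheory Set Filter Topology Real

theorem hasDerivAt_arctan_div_sqrt_div_sqrt {c : ℝ} (hc : 0 < c) (μ : ℝ) :
    HasDerivAt (fun t => arctan (t / √c) / √c) (c + μ ^ 2)⁻¹ μ := by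
  have hs : √c ≠ 0 := (Real.sqrt_pos.2 hc).ne'
  refine ((((hasDerivAt_id μ).div_const √c).arctan).div_const √c).congr_deriv ?_
  field_simp
  rw [sq_sqrt hc.le, id]

theorem tendsto_arctan_div_sqrt_div_sqrt {c : ℝ} (hc : 0 < c) :
    Tendsto (fun t => arctan (t / √c) / √c) atTop (𝓝 (π / 2 / √c)) :=
  ((tendsto_nhds_of_tendsto_nhdsWithin tendsto_arctan_atTop).comp
    (tendsto_id.atTop_div_const (Real.sqrt_pos.2 hc))).div_const _

theorem integrableOn_Ioi_inv_add_sq {c : ℝ} (hc : 0 < c) :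
    IntegrableOn (fun μ : ℝ => (c + μ ^ 2)⁻¹) (Ioi 0) :=
  integrableOn_Ioi_deriv_of_nonneg' (fun μ _ => hasDerivAt_arctan_div_sqrt_div_sqrt hc μ)
    (fun μ _ => by positivity) (tendsto_arctan_div_sqrt_div_sqrt hc)

theorem integral_Ioi_inv_add_sq {c : ℝ} (hc : 0 < c) :
    ∫ μ in Ioi (0 : ℝ), (c + μ ^ 2)⁻¹ = π / 2 * (√c)⁻¹ := by
  rw [integral_Ioi_of_hasDerivAt_of_nonneg' (fun μ _ => hasDerivAt_arctan_div_sqrt_div_sqrt hc μ)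
    (fun μ _ => by positivity) (tendsto_arctan_div_sqrt_div_sqrt hc)]
  simp [div_eq_mul_inv]

theorem continuousOn_uncurry_inv_add_sq {s t : Set ℝ} (h : ∀ x ∈ s, 0 < x) :
    ContinuousOn (Function.uncurry fun μ x : ℝ => (x + μ ^ 2)⁻¹) (t ×ˢ s) :=
  ContinuousOn.inv₀ (by fun_prop) fun p hp => by positivity [h p.2 hp.2]

theorem norm_inv_add_sq_le {κ x : ℝ} (hκ : 0 < κ) (hx : κ ≤ x) (μ : ℝ) :
    ‖(x + μ ^ 2)⁻¹‖ ≤ (κ + μ ^ 2)⁻¹ := by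
  rw [norm_inv, Real.norm_of_nonneg (by positivity [hκ.trans_le hx])]
  exact inv_anti₀ (by positivity) (by linarith)

theorem Ring.inverse_mul_commutator_mul_inverse {R : Type*} [Ring R] {u : R} (hu : IsUnit u)
    (b : R) :
    Ring.inverse u * (u * b - b * u) * Ring.inverse u = b * Ring.inverse u - Ring.inverse u * b := by
  calc Ring.inverse u * (u * b - b * u) * Ring.inverse u
      = Ring.inverse u * u * (b * Ring.inverse u) -
          Ring.inverse u * b * (u * Ring.inverse u) := by noncomm_ring
    _ = b * Ring.inverse u - Ring.inverse u * b := by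
        rw [Ring.inverse_mul_cancel u hu, Ring.mul_inverse_cancel u hu, one_mul, mul_one]

theorem add_smul_one_commutator {R A : Type*} [CommSemiring R] [Ring A] [Algebra R A]
    (a b : A) (r : R) : (a + r • 1) * b - b * (a + r • 1) = a * b - b * a := by
  simp only [add_mul, mul_add, smul_mul_assoc, mul_smul_comm, one_mul, mul_one]
  abel

theorem isUnit_add_smul_one_of_neg_notMem_spectrum {R A : Type*} [CommRing R] [Ring A]
    [Algebra R A] {a : A} {r : R} (h : -r ∉ spectrum R a) : IsUnit (a + r • (1 : A)) := by
  have := (spectrum.notMem_iff.1 h).neg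
  rwa [neg_sub, Algebra.algebraMap_eq_smul_one, neg_smul, sub_neg_eq_add] at this

section Resolvent

variable {A : Type*} [CStarAlgebra A] {a : A}

theorem inverse_add_smul_one_eq_cfc (ha : IsSelfAdjoint a) {r : ℝ}
    (h : ∀ x ∈ spectrum ℝ a, x + r ≠ 0) :
    Ring.inverse (a + r • (1 : A)) = cfc (fun x : ℝ => (x + r)⁻¹) a := by
  rw [cfc_inv (fun x : ℝ => x + r) a h, cfc_add_const r (fun x : ℝ => x) a, cfc_id' ℝ a,
    Algebra.algebraMap_eq_smul_one]

theorem inverse_add_sq_smul_one_eq_cfc (ha : IsSelfAdjoint a) (h : ∀ x ∈ spectrum ℝ a, 0 < x) :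
    (fun μ : ℝ => Ring.inverse (a + μ ^ 2 • (1 : A))) =
      fun μ : ℝ => cfc (fun x : ℝ => (x + μ ^ 2)⁻¹) a :=
  funext fun μ => inverse_add_smul_one_eq_cfc ha fun x hx => by positivity [h x hx]

theorem integrableOn_inverse_add_sq_smul_one (ha : IsSelfAdjoint a) {κ : ℝ} (hκ : 0 < κ)
    (hσ : ∀ x ∈ spectrum ℝ a, κ ≤ x) :
    IntegrableOn (fun μ : ℝ => Ring.inverse (a + μ ^ 2 • (1 : A))) (Ioi 0) := by
  rw [inverse_add_sq_smul_one_eq_cfc ha fun x hx => hκ.trans_le (hσ x hx)]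
  exact integrableOn_cfc measurableSet_Ioi _ _ a
    (continuousOn_uncurry_inv_add_sq fun x hx => hκ.trans_le (hσ x hx))
    (.of_forall fun μ x hx => norm_inv_add_sq_le hκ (hσ x hx) μ)
    (integrableOn_Ioi_inv_add_sq hκ).hasFiniteIntegral

variable [PartialOrder A] [StarOrderedRing A]

theorem inverse_sqrt_eq_cfc (ha : 0 ≤ a) (h : ∀ x ∈ spectrum ℝ a, 0 < x) :
    Ring.inverse (CFC.sqrt a) = cfc (fun x : ℝ => (√x)⁻¹) a := by
  rw [CFC.sqrt_eq_real_sqrt a, cfcₙ_eq_cfc, cfc_inv Real.sqrt a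
    fun x hx => (Real.sqrt_pos.2 (h x hx)).ne']

theorem setIntegral_inverse_add_sq_smul_one (ha : IsSelfAdjoint a) {κ : ℝ} (hκ : 0 < κ)
    (hσ : ∀ x ∈ spectrum ℝ a, κ ≤ x) :
    ∫ μ in Ioi (0 : ℝ), Ring.inverse (a + μ ^ 2 • (1 : A)) =
      (π / 2) • Ring.inverse (CFC.sqrt a) := by
  have hpos : ∀ x ∈ spectrum ℝ a, 0 < x := fun x hx => hκ.trans_le (hσ x hx)
  have ha₀ : 0 ≤ a :=
    (StarOrderedRing.nonneg_iff_spectrum_nonneg a ha).2 fun x hx => (hpos x hx).le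
  rw [inverse_add_sq_smul_one_eq_cfc ha hpos, ← cfc_setIntegral measurableSet_Ioi _ _ a
    (continuousOn_uncurry_inv_add_sq hpos)
    (.of_forall fun μ x hx => norm_inv_add_sq_le hκ (hσ x hx) μ)
    (integrableOn_Ioi_inv_add_sq hκ).hasFiniteIntegral,
    inverse_sqrt_eq_cfc ha₀ hpos, ← cfc_smul _ (fun x : ℝ => (√x)⁻¹) a
      (ContinuousOn.inv₀ (by fun_prop) fun x hx => (Real.sqrt_pos.2 (hpos x hx)).ne')]
  exact cfc_congr fun x hx => integral_Ioi_inv_add_sq (hpos x hx)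

end Resolvent

/-- In a unital C*-algebra, if `a` is self-adjoint and `a - κ₀·1` is
positive for some real `κ₀ > 0`, then for every `b` the function
`μ ↦ (a + μ²·1)⁻¹ (ab - ba) (a + μ²·1)⁻¹` is Bochner integrable on `[0, ∞)` and
`b·a^{-1/2} - a^{-1/2}·b = (2/π) ∫₀^∞ (a + μ²·1)⁻¹ (ab - ba) (a + μ²·1)⁻¹ dμ`. -/
theorem stmt4 {A : Type*} [CStarAlgebra A] [PartialOrder A] [StarOrderedRing A]
    (a : A) (ha : IsSelfAdjoint a) (κ₀ : ℝ) (hκ : 0 < κ₀)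
    (hpos : 0 ≤ a - κ₀ • (1 : A)) :
    ∀ b : A,
      IntegrableOn
        (fun μ : ℝ => Ring.inverse (a + μ ^ 2 • (1 : A)) * (a * b - b * a) *
          Ring.inverse (a + μ ^ 2 • (1 : A))) (Set.Ioi 0) ∧
      b * Ring.inverse (CFC.sqrt a) - Ring.inverse (CFC.sqrt a) * b =
        (2 / Real.pi) • ∫ μ in Set.Ioi (0 : ℝ),
          Ring.inverse (a + μ ^ 2 • (1 : A)) * (a * b - b * a) *
            Ring.inverse (a + μ ^ 2 • (1 : A)) := by
  intro b
  have hσ : ∀ x ∈ spectrum ℝ a, κ₀ ≤ x := by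
    rw [← algebraMap_le_iff_le_spectrum ha, Algebra.algebraMap_eq_smul_one]
    exact sub_nonneg.1 hpos
  have hunit (μ : ℝ) : IsUnit (a + μ ^ 2 • (1 : A)) :=
    isUnit_add_smul_one_of_neg_notMem_spectrum fun h => by
      nlinarith [hσ _ h, sq_nonneg μ]
  have hcomm : (fun μ : ℝ => Ring.inverse (a + μ ^ 2 • (1 : A)) * (a * b - b * a) *
      Ring.inverse (a + μ ^ 2 • (1 : A))) = fun μ : ℝ =>
      b * Ring.inverse (a + μ ^ 2 • (1 : A)) - Ring.inverse (a + μ ^ 2 • (1 : A)) * b := by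
    funext μ
    rw [← add_smul_one_commutator a b (μ ^ 2), Ring.inverse_mul_commutator_mul_inverse (hunit μ)]
  have hR := integrableOn_inverse_add_sq_smul_one ha hκ hσ
  rw [hcomm]
  refine ⟨(hR.const_mul b).sub (hR.mul_const b), ?_⟩
  rw [integral_sub (hR.const_mul b) (hR.mul_const b), integral_const_mul_of_integrable hR,
    integral_mul_const_of_integrable hR, setIntegral_inverse_add_sq_smul_one ha hκ hσ,
    mul_smul_comm, smul_mul_assoc, ← smul_sub, smul_smul,
    div_mul_div_cancel₀ Real.pi_ne_zero, div_self two_ne_zero, one_smul]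
end

section
/- Let A be a unital C*-algebra, let a ∈ A be self-adjoint, and let κ₀ > 0 be a real number such that a - κ₀·1 is positive. Then for every b ∈ A, ‖b · a^{-1/2} - a^{-1/2} · b‖ ≤ ‖a b - b a‖ / (2 κ₀^{3/2}). -/
/-!
Put `s = a^{1/2}`, so that `s ≥ √κ₀`. Then `[b, s⁻¹] = s⁻¹ [s, b] s⁻¹` and
`[a, b] = s [s, b] + [s, b] s`. For `s ≥ c > 0` the anticommutator bound
`‖s x + x s‖ ≥ 2c ‖x‖` controls `[s, b]` by `‖[a, b]‖ / (2√κ₀)`, and applied to `x = s⁻¹` it gives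
`‖s⁻¹‖ ≤ 1/√κ₀`; together these give the constant `1 / (2 κ₀^{3/2})`.
-/

section StarOrderedAlgebra

variable {A : Type*} [Ring A] [StarRing A] [PartialOrder A] [StarOrderedRing A] [Algebra ℝ A]
  [StarModule ℝ A]

lemma IsSelfAdjoint.of_algebraMap_le {s : A} {c : ℝ} (hs : algebraMap ℝ A c ≤ s) :
    IsSelfAdjoint s := by
  simpa using (IsSelfAdjoint.of_nonneg (sub_nonneg.mpr hs)).add
    (IsSelfAdjoint.algebraMap A (.all c))

end StarOrderedAlgebra

namespace CStarAlgebra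

variable {A : Type*} [CStarAlgebra A] [PartialOrder A] [StarOrderedRing A]

lemma norm_le_of_neg_algebraMap_le_of_le_algebraMap {x : A} {t : ℝ} (ht : 0 ≤ t)
    (h₁ : -algebraMap ℝ A t ≤ x) (h₂ : x ≤ algebraMap ℝ A t) : ‖x‖ ≤ t := by
  obtain _ | _ := subsingleton_or_nontrivial A
  · simp [Subsingleton.elim x 0, ht]
  rw [← map_neg] at h₁
  have hx : IsSelfAdjoint x := .of_algebraMap_le h₁
  rw [algebraMap_le_iff_le_spectrum] at h₁
  rw [le_algebraMap_iff_spectrum_le] at h₂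
  rcases norm_or_neg_norm_mem_spectrum hx with hσ | hσ
  · exact h₂ _ hσ
  · linarith [h₁ _ hσ]

lemma le_norm_of_algebraMap_le [Nontrivial A] {s : A} {c : ℝ} (hs : algebraMap ℝ A c ≤ s) :
    c ≤ ‖s‖ :=
  algebraMap_le_algebraMap.mp <|
    hs.trans (IsSelfAdjoint.of_algebraMap_le hs).le_algebraMap_norm_self

/-- Writing `s = m + r` with `m` the midpoint of `[c, ‖s‖]` gives `‖r‖ ≤ m - c`, so
`‖s x + x s‖ ≥ 2m‖x‖ - 2‖r‖‖x‖ ≥ 2c‖x‖`. -/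
lemma two_mul_norm_le_norm_mul_add_mul {s : A} {c : ℝ} (hs : algebraMap ℝ A c ≤ s) (x : A) :
    2 * c * ‖x‖ ≤ ‖s * x + x * s‖ := by
  obtain _ | _ := subsingleton_or_nontrivial A
  · simp [Subsingleton.elim x 0]
  set m := (‖s‖ + c) / 2 with hm
  set r := s - algebraMap ℝ A m
  have hr : ‖r‖ ≤ m - c := by
    apply norm_le_of_neg_algebraMap_le_of_le_algebraMap
    · linarith [le_norm_of_algebraMap_le hs]
    · rw [neg_le_sub_iff_le_add, ← sub_le_iff_le_add, ← map_sub]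
      convert hs using 2
      ring
    · rw [sub_le_iff_le_add, ← map_add]
      convert (IsSelfAdjoint.of_algebraMap_le hs).le_algebraMap_norm_self using 2
      ring
  have hsum : s * x + x * s = (2 * m) • x + (r * x + x * r) := by
    simp only [r, sub_mul, mul_sub, Algebra.algebraMap_eq_smul_one, smul_mul_assoc, one_mul,
      mul_smul_comm, mul_one]
    module
  calc 2 * c * ‖x‖ = 2 * m * ‖x‖ - 2 * (m - c) * ‖x‖ := by ring
    _ ≤ ‖(2 * m) • x‖ - ‖r * x + x * r‖ := by
      gcongr ?_ - ?_
      · rw [norm_smul]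
        exact mul_le_mul_of_nonneg_right (Real.le_norm_self _) (norm_nonneg x)
      · calc ‖r * x + x * r‖ ≤ ‖r‖ * ‖x‖ + ‖x‖ * ‖r‖ :=
            norm_add_le_of_le (norm_mul_le _ _) (norm_mul_le _ _)
          _ ≤ 2 * (m - c) * ‖x‖ := by nlinarith [norm_nonneg x]
    _ ≤ ‖s * x + x * s‖ := hsum ▸ norm_sub_le_norm_add _ _

lemma norm_ringInverse_le {s : A} {c : ℝ} (hc : 0 < c) (hs : algebraMap ℝ A c ≤ s) :
    ‖Ring.inverse s‖ ≤ c⁻¹ := by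
  obtain _ | _ := subsingleton_or_nontrivial A
  · simp [Subsingleton.elim (Ring.inverse s) 0, hc.le]
  have hu : IsUnit s := isUnit_of_le _ hs (isStrictlyPositive_algebraMap hc)
  have h := two_mul_norm_le_norm_mul_add_mul hs (Ring.inverse s)
  rw [Ring.mul_inverse_cancel s hu, Ring.inverse_mul_cancel s hu] at h
  have h₂ : ‖(1 : A) + 1‖ ≤ 2 := (norm_add_le _ _).trans (by simp [one_add_one_eq_two])
  rw [← one_div, le_div_iff₀ hc]
  linarith

lemma norm_mul_ringInverse_sub_ringInverse_mul_le {s : A} {c : ℝ} (hc : 0 < c)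
    (hs : algebraMap ℝ A c ≤ s) (b : A) :
    ‖b * Ring.inverse s - Ring.inverse s * b‖ ≤ ‖s * s * b - b * (s * s)‖ / (2 * c ^ 3) := by
  have hu : IsUnit s := isUnit_of_le _ hs (isStrictlyPositive_algebraMap hc)
  set t := Ring.inverse s
  set d := s * b - b * s with hd
  have hcomm : b * t - t * b = t * d * t := by
    calc b * t - t * b = t * s * b * t - t * b * (s * t) := by
          rw [Ring.inverse_mul_cancel s hu, Ring.mul_inverse_cancel s hu, one_mul, mul_one]
      _ = t * d * t := by rw [hd]; noncomm_ring
  have hsq : s * s * b - b * (s * s) = s * d + d * s := by rw [hd]; noncomm_ring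
  have ht := norm_ringInverse_le hc hs
  calc ‖b * t - t * b‖ ≤ ‖t‖ * ‖d‖ * ‖t‖ := hcomm ▸ norm_mul₃_le
    _ ≤ c⁻¹ * ‖d‖ * c⁻¹ := by gcongr
    _ = 2 * c * ‖d‖ / (2 * c ^ 3) := by field_simp
    _ ≤ ‖s * s * b - b * (s * s)‖ / (2 * c ^ 3) := by
      rw [hsq]
      gcongr
      exact two_mul_norm_le_norm_mul_add_mul hs d

end CStarAlgebra

theorem stmt5_general {A : Type*} [CStarAlgebra A] [PartialOrder A] [StarOrderedRing A]
    (a : A) (κ₀ : ℝ) (hκ : 0 < κ₀)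
    (hpos : 0 ≤ a - κ₀ • (1 : A)) :
    ∀ b : A,
      ‖b * Ring.inverse (CFC.sqrt a) - Ring.inverse (CFC.sqrt a) * b‖ ≤
        ‖a * b - b * a‖ / (2 * κ₀ ^ ((3 : ℝ) / 2)) := by
  intro b
  have hκa : algebraMap ℝ A κ₀ ≤ a := by
    rwa [sub_nonneg, ← Algebra.algebraMap_eq_smul_one] at hpos
  have hsqrt : algebraMap ℝ A √κ₀ ≤ CFC.sqrt a :=
    calc algebraMap ℝ A √κ₀ = CFC.sqrt (algebraMap ℝ A κ₀) :=
          (CFC.sqrt_unique (by rw [← map_mul, Real.mul_self_sqrt hκ.le])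
            (algebraMap_nonneg A (Real.sqrt_nonneg κ₀))).symm
      _ ≤ CFC.sqrt a := CFC.sqrt_le_sqrt _ _ hκa
  have h := CStarAlgebra.norm_mul_ringInverse_sub_ringInverse_mul_le
    (Real.sqrt_pos.2 hκ) hsqrt b
  rw [CFC.sqrt_mul_sqrt_self a ((algebraMap_nonneg A hκ.le).trans hκa), Real.sqrt_eq_rpow,
    ← Real.rpow_natCast, ← Real.rpow_mul hκ.le] at h
  convert h using 4
  norm_num

/-- In a unital C*-algebra, if `a` is self-adjoint and `a - κ₀·1` is
positive for some real `κ₀ > 0`, then for every `b`,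
`‖b·a^{-1/2} - a^{-1/2}·b‖ ≤ ‖ab - ba‖ / (2 κ₀^{3/2})`. -/
theorem stmt5 {A : Type*} [CStarAlgebra A] [PartialOrder A] [StarOrderedRing A]
    (a : A) (ha : IsSelfAdjoint a) (κ₀ : ℝ) (hκ : 0 < κ₀)
    (hpos : 0 ≤ a - κ₀ • (1 : A)) :
    ∀ b : A,
      ‖b * Ring.inverse (CFC.sqrt a) - Ring.inverse (CFC.sqrt a) * b‖ ≤
        ‖a * b - b * a‖ / (2 * κ₀ ^ ((3 : ℝ) / 2)) :=
  stmt5_general a κ₀ hκ hpos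
end

section
/- Let A be a unital C*-algebra and I a closed two-sided ideal of A. Let d ∈ A be self-adjoint, let ρ ∈ I be self-adjoint, set a := d² + ρ, and suppose there is a real κ₀ > 0 such that a - κ₀·1 is positive. Then F := a^{-1/2} · d satisfies: (i) F* - F ∈ I; (ii) F² - 1 ∈ I. -/
/-!
Call `x` an element of the essential commutant of `d` (relative to `I`) if `x d - d x ∈ I`. These
elements form a subalgebra, closed when `I` is, and stable under inversion. It contains `d` and `I`,
hence `a = d² + ρ`, and therefore the closed star subalgebra generated by `a`, which contains `√a`.
So `e = (√a)⁻¹` commutes with `d` modulo `I`. Then `F* - F = d e - e d ∈ I`, and modulo `I`,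
`F² ≡ e² d² = e² (a - ρ) ≡ 1`.
-/

namespace TwoSidedIdeal

section Ring

variable (R : Type*) {A : Type*} [CommSemiring R] [Ring A] [Algebra R A] (I : TwoSidedIdeal A)

def essentialCommutant (d : A) : Subalgebra R A where
  carrier := {x | x * d - d * x ∈ I}
  mul_mem' {x y} hx hy := by
    have : x * y * d - d * (x * y) = x * (y * d - d * y) + (x * d - d * x) * y := by
      noncomm_ring
    simpa only [Set.mem_ofPred_eq, this] using
      I.add_mem (I.mul_mem_left x _ hy) (I.mul_mem_right _ y hx)
  add_mem' {x y} hx hy := by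
    have : (x + y) * d - d * (x + y) = (x * d - d * x) + (y * d - d * y) := by noncomm_ring
    simpa only [Set.mem_ofPred_eq, this] using I.add_mem hx hy
  algebraMap_mem' r := by simp [Algebra.commutes]

variable {R I} {d x : A}

lemma mem_essentialCommutant : x ∈ I.essentialCommutant R d ↔ x * d - d * x ∈ I := Iff.rfl

lemma self_mem_essentialCommutant : d ∈ I.essentialCommutant R d := by
  simp [mem_essentialCommutant]

lemma mem_essentialCommutant_of_mem (hx : x ∈ I) : x ∈ I.essentialCommutant R d :=
  I.sub_mem (I.mul_mem_right _ _ hx) (I.mul_mem_left _ _ hx)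

lemma isClosed_essentialCommutant [TopologicalSpace A] [IsTopologicalRing A]
    (hI : IsClosed (I : Set A)) : IsClosed (I.essentialCommutant R d : Set A) :=
  hI.preimage (by fun_prop)

lemma ringInverse_mem_essentialCommutant {u : A} (hu : IsUnit u)
    (h : u ∈ I.essentialCommutant R d) : Ring.inverse u ∈ I.essentialCommutant R d := by
  set e := Ring.inverse u
  have : e * (u * d - d * u) * e = d * e - e * d :=
    calc e * (u * d - d * u) * e = (e * u) * d * e - e * d * (u * e) := by noncomm_ring
      _ = d * e - e * d := by
        rw [Ring.inverse_mul_cancel u hu, Ring.mul_inverse_cancel u hu, one_mul, mul_one]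
  rw [mem_essentialCommutant, ← neg_sub, ← this]
  exact I.neg_mem (I.mul_mem_right _ _ (I.mul_mem_left _ _ h))

lemma elemental_le_essentialCommutant [StarRing R] [TopologicalSpace A] [IsTopologicalRing A]
    [StarRing A] [ContinuousStar A] [StarModule R A] (hI : IsClosed (I : Set A)) {a : A}
    (ha : a ∈ I.essentialCommutant R d) (ha' : star a ∈ I.essentialCommutant R d) :
    (StarAlgebra.elemental R a).toSubalgebra ≤ I.essentialCommutant R d := by
  rw [StarAlgebra.elemental, StarSubalgebra.topologicalClosure_toSubalgebra_comm,
    StarAlgebra.adjoin_toSubalgebra]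
  refine Subalgebra.topologicalClosure_minimal (Algebra.adjoin_le ?_)
    (isClosed_essentialCommutant hI)
  rintro x (rfl | hx)
  · exact ha
  · rw [← star_star x, hx]
    exact ha'

lemma ringInverse_mul_sq_sub_one_mem {u : A} (hu : IsUnit u)
    (he : Ring.inverse u ∈ I.essentialCommutant R d) (h : u ^ 2 - d ^ 2 ∈ I) :
    (Ring.inverse u * d) ^ 2 - 1 ∈ I := by
  set e := Ring.inverse u
  have hee : e * e * u ^ 2 = 1 := by
    rw [sq, mul_assoc, ← mul_assoc e u u, Ring.inverse_mul_cancel u hu, one_mul,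
      Ring.inverse_mul_cancel u hu]
  have : (e * d) ^ 2 - 1 = -(e * (e * d - d * e) * d) - e * e * (u ^ 2 - d ^ 2) := by
    rw [mul_sub (e * e), hee]
    noncomm_ring
  rw [this]
  exact I.sub_mem (I.neg_mem (I.mul_mem_right _ _ (I.mul_mem_left _ _ he)))
    (I.mul_mem_left _ _ h)

end Ring

section CStarAlgebra

variable {A : Type*} [CStarAlgebra A] [PartialOrder A] [StarOrderedRing A]
  {I : TwoSidedIdeal A} {d : A}

lemma sqrt_mem_essentialCommutant (hI : IsClosed (I : Set A)) {a : A} (ha : 0 ≤ a)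
    (haS : a ∈ I.essentialCommutant ℝ d) : CFC.sqrt a ∈ I.essentialCommutant ℝ d := by
  have : CFC.sqrt a ∈ StarAlgebra.elemental ℝ a :=
    (range_cfc_nnreal_subset a ha ⟨NNReal.sqrt, CFC.sqrt_eq_cfc.symm⟩).1
  exact elemental_le_essentialCommutant hI haS (by rwa [ha.isSelfAdjoint.star_eq]) this

end CStarAlgebra

end TwoSidedIdeal

theorem stmt8_general {A : Type*} [CStarAlgebra A] [PartialOrder A] [StarOrderedRing A]
    (I : TwoSidedIdeal A) (hI : IsClosed (I : Set A))
    (d : A) (hd : IsSelfAdjoint d) (ρ : A) (hρI : ρ ∈ I)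
    (κ₀ : ℝ) (hκ : 0 < κ₀)
    (hpos : 0 ≤ d ^ 2 + ρ - κ₀ • (1 : A)) :
    star (Ring.inverse (CFC.sqrt (d ^ 2 + ρ)) * d) -
        Ring.inverse (CFC.sqrt (d ^ 2 + ρ)) * d ∈ I ∧
      (Ring.inverse (CFC.sqrt (d ^ 2 + ρ)) * d) ^ 2 - 1 ∈ I := by
  set a := d ^ 2 + ρ
  have ha : IsStrictlyPositive a := (isStrictlyPositive_one.smul hκ).of_le (sub_nonneg.mp hpos)
  have hs : IsUnit (CFC.sqrt a) := (CFC.isUnit_sqrt_iff a).mpr ha.isUnit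
  have haS : a ∈ I.essentialCommutant ℝ d :=
    add_mem (pow_mem TwoSidedIdeal.self_mem_essentialCommutant 2)
      (TwoSidedIdeal.mem_essentialCommutant_of_mem hρI)
  have he : Ring.inverse (CFC.sqrt a) ∈ I.essentialCommutant ℝ d :=
    TwoSidedIdeal.ringInverse_mem_essentialCommutant hs
      (TwoSidedIdeal.sqrt_mem_essentialCommutant hI ha.nonneg haS)
  refine ⟨?_, TwoSidedIdeal.ringInverse_mul_sq_sub_one_mem hs he ?_⟩
  · rw [star_mul, hd.star_eq, (CFC.sqrt_nonneg a).isSelfAdjoint.ringInverse.star_eq, ← neg_sub]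
    exact I.neg_mem he
  · rw [CFC.sq_sqrt a ha.nonneg, add_sub_cancel_left]
    exact hρI

/-- Let `A` be a unital C*-algebra and `I` a closed two-sided ideal.
Let `d ∈ A` be self-adjoint, `ρ ∈ I` self-adjoint, set `a := d² + ρ`, and suppose
`a - κ₀·1` is positive for some real `κ₀ > 0`. Then `F := a^{-1/2}·d` satisfies
`F* - F ∈ I` and `F² - 1 ∈ I`. -/
theorem stmt8 {A : Type*} [CStarAlgebra A] [PartialOrder A] [StarOrderedRing A]
    (I : TwoSidedIdeal A) (hI : IsClosed (I : Set A))
    (d : A) (hd : IsSelfAdjoint d) (ρ : A) (hρI : ρ ∈ I) (hρ : IsSelfAdjoint ρ)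
    (κ₀ : ℝ) (hκ : 0 < κ₀)
    (hpos : 0 ≤ d ^ 2 + ρ - κ₀ • (1 : A)) :
    star (Ring.inverse (CFC.sqrt (d ^ 2 + ρ)) * d) -
        Ring.inverse (CFC.sqrt (d ^ 2 + ρ)) * d ∈ I ∧
      (Ring.inverse (CFC.sqrt (d ^ 2 + ρ)) * d) ^ 2 - 1 ∈ I :=
  stmt8_general I hI d hd ρ hρI κ₀ hκ hpos
end

section
/- Let A be a unital C*-algebra and I a closed two-sided ideal of A. Let d ∈ A be self-adjoint, let ρ ∈ I be self-adjoint, set a := d² + ρ, and suppose there is a real κ₀ > 0 such that a - κ₀·1 is positive. Then F := a^{-1/2} · d is invertible modulo I with parametrix given by F itself: F·F - 1 ∈ I, F*·F - 1 ∈ I, and F·F* - 1 ∈ I. -/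
/-!
Modulo `I` the element `a = d² + ρ` agrees with `d²`, so it commutes with `d`; the elements
commuting with `d` modulo a closed ideal form a closed subalgebra, which therefore also contains
`√a` and its inverse `t`. Hence `F = t d` satisfies `F² ≡ t² d² ≡ t² a = 1` and
`F* - F = [d, t] ≡ 0` modulo `I`.
-/

namespace TwoSidedIdeal

section CommutantMod

variable (R : Type*) {A : Type*} [CommSemiring R] [Ring A] [Algebra R A]
variable (I : TwoSidedIdeal A) (d : A)

def commutantMod : Subalgebra R A where
  carrier := {x | d * x - x * d ∈ I}
  mul_mem' {x y} hx hy := by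
    have h : d * (x * y) - x * y * d = (d * x - x * d) * y + x * (d * y - y * d) := by
      noncomm_ring
    rw [Set.mem_ofPred_eq, h]
    exact I.add_mem (I.mul_mem_right _ _ hx) (I.mul_mem_left _ _ hy)
  add_mem' {x y} hx hy := by
    have h : d * (x + y) - (x + y) * d = (d * x - x * d) + (d * y - y * d) := by noncomm_ring
    rw [Set.mem_ofPred_eq, h]
    exact I.add_mem hx hy
  algebraMap_mem' r := by simp [Algebra.commutes, I.zero_mem]

variable {R I d}

theorem mem_commutantMod {x : A} : x ∈ I.commutantMod R d ↔ d * x - x * d ∈ I := Iff.rfl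

theorem self_mem_commutantMod : d ∈ I.commutantMod R d := by
  simp [mem_commutantMod, I.zero_mem]

theorem mem_commutantMod_of_mem {x : A} (hx : x ∈ I) : x ∈ I.commutantMod R d :=
  I.sub_mem (I.mul_mem_left _ _ hx) (I.mul_mem_right _ _ hx)

theorem ringInverse_mem_commutantMod {x : A} (hx : IsUnit x) (hxd : x ∈ I.commutantMod R d) :
    Ring.inverse x ∈ I.commutantMod R d := by
  lift x to Aˣ using hx
  have h : d * ↑x⁻¹ - ↑x⁻¹ * d = -(↑x⁻¹ * (d * x - x * d) * ↑x⁻¹) := by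
    simp [mul_sub, sub_mul, mul_assoc]
  rw [Ring.inverse_unit, mem_commutantMod, h]
  exact I.neg_mem (I.mul_mem_right _ _ (I.mul_mem_left _ _ hxd))

theorem isClosed_commutantMod [TopologicalSpace A] [IsTopologicalRing A]
    (hI : IsClosed (I : Set A)) : IsClosed (I.commutantMod R d : Set A) :=
  hI.preimage (by fun_prop)

end CommutantMod

section Parametrix

variable {A : Type*} [Ring A] (I : TwoSidedIdeal A)

theorem star_mul_self_sub_one_mem_and_mul_star_sub_one_mem [StarRing A] {F : A}
    (hF : star F - F ∈ I) (hFF : F * F - 1 ∈ I) :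
    star F * F - 1 ∈ I ∧ F * star F - 1 ∈ I := by
  constructor
  · have h : star F * F - 1 = (star F - F) * F + (F * F - 1) := by noncomm_ring
    exact h ▸ I.add_mem (I.mul_mem_right _ _ hF) hFF
  · have h : F * star F - 1 = F * (star F - F) + (F * F - 1) := by noncomm_ring
    exact h ▸ I.add_mem (I.mul_mem_left _ _ hF) hFF

variable {I}

theorem mul_self_sub_one_mem_of_mul_self_mul_eq_one {t d ρ : A} (htd : d * t - t * d ∈ I)
    (hρ : ρ ∈ I) (ht : t * t * (d ^ 2 + ρ) = 1) : t * d * (t * d) - 1 ∈ I := by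
  have h : t * d * (t * d) - 1 = t * (d * t - t * d) * d - t * t * ρ := by
    rw [← ht]; noncomm_ring
  rw [h]
  exact I.sub_mem (I.mul_mem_right _ _ (I.mul_mem_left _ _ htd)) (I.mul_mem_left _ _ hρ)

theorem parametrix_of_mul_self_mul_eq_one [StarRing A] {t d ρ : A} (ht : IsSelfAdjoint t)
    (hd : IsSelfAdjoint d) (htd : d * t - t * d ∈ I) (hρ : ρ ∈ I)
    (htt : t * t * (d ^ 2 + ρ) = 1) :
    t * d * (t * d) - 1 ∈ I ∧ star (t * d) * (t * d) - 1 ∈ I ∧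
      t * d * star (t * d) - 1 ∈ I := by
  have hFF := mul_self_sub_one_mem_of_mul_self_mul_eq_one htd hρ htt
  have hF : star (t * d) - t * d = d * t - t * d := by rw [star_mul, hd.star_eq, ht.star_eq]
  exact ⟨hFF, I.star_mul_self_sub_one_mem_and_mul_star_sub_one_mem (hF ▸ htd) hFF⟩

end Parametrix

end TwoSidedIdeal

section SelfAdjoint

variable {A : Type*} [CStarAlgebra A]

theorem IsSelfAdjoint.coe_elemental_subset {a : A} (ha : IsSelfAdjoint a) {S : Subalgebra ℝ A}
    (hS : IsClosed (S : Set A)) (haS : a ∈ S) : (StarAlgebra.elemental ℝ a : Set A) ⊆ S := by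
  have hadjoin : (StarAlgebra.adjoin ℝ {a} : Set A) ⊆ S := by
    rw [← StarSubalgebra.coe_toSubalgebra, StarAlgebra.adjoin_toSubalgebra, Set.star_singleton,
      ha.star_eq, Set.union_self]
    exact Algebra.adjoin_le (Set.singleton_subset_iff.2 haS)
  exact closure_minimal hadjoin hS

theorem CFC.sqrt_mem_of_mem [PartialOrder A] [StarOrderedRing A] {a : A} (ha : 0 ≤ a)
    {S : Subalgebra ℝ A} (hS : IsClosed (S : Set A)) (haS : a ∈ S) : CFC.sqrt a ∈ S :=
  ha.isSelfAdjoint.coe_elemental_subset hS haS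
    (range_cfc_nnreal_subset a ha ⟨NNReal.sqrt, CFC.sqrt_eq_cfc.symm⟩).1

end SelfAdjoint

theorem stmt9_general {A : Type*} [CStarAlgebra A] [PartialOrder A] [StarOrderedRing A]
    (I : TwoSidedIdeal A) (hI : IsClosed (I : Set A))
    (d : A) (hd : IsSelfAdjoint d) (ρ : A) (hρI : ρ ∈ I)
    (κ₀ : ℝ) (hκ : 0 < κ₀)
    (hpos : 0 ≤ d ^ 2 + ρ - κ₀ • (1 : A)) :
    (Ring.inverse (CFC.sqrt (d ^ 2 + ρ)) * d) *
        (Ring.inverse (CFC.sqrt (d ^ 2 + ρ)) * d) - 1 ∈ I ∧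
      star (Ring.inverse (CFC.sqrt (d ^ 2 + ρ)) * d) *
        (Ring.inverse (CFC.sqrt (d ^ 2 + ρ)) * d) - 1 ∈ I ∧
      (Ring.inverse (CFC.sqrt (d ^ 2 + ρ)) * d) *
        star (Ring.inverse (CFC.sqrt (d ^ 2 + ρ)) * d) - 1 ∈ I := by
  set a := d ^ 2 + ρ
  have ha : IsStrictlyPositive a := (isStrictlyPositive_algebraMap hκ).of_le <| by
    rwa [Algebra.algebraMap_eq_smul_one, ← sub_nonneg]
  set s := CFC.sqrt a
  have hs : IsUnit s := ha.isUnit_cfcSqrt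
  have haI : a ∈ I.commutantMod ℝ d :=
    add_mem (pow_mem TwoSidedIdeal.self_mem_commutantMod 2)
      (TwoSidedIdeal.mem_commutantMod_of_mem hρI)
  have hsI : s ∈ I.commutantMod ℝ d :=
    CFC.sqrt_mem_of_mem ha.nonneg (TwoSidedIdeal.isClosed_commutantMod hI) haI
  have htt : Ring.inverse s * Ring.inverse s * a = 1 :=
    calc Ring.inverse s * Ring.inverse s * a
        = Ring.inverse s * Ring.inverse s * (s * s) := by rw [CFC.sqrt_mul_sqrt_self a ha.nonneg]
      _ = Ring.inverse s * (Ring.inverse s * s) * s := by noncomm_ring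
      _ = 1 := by rw [Ring.inverse_mul_cancel _ hs, mul_one, Ring.inverse_mul_cancel _ hs]
  exact TwoSidedIdeal.parametrix_of_mul_self_mul_eq_one ha.sqrt.ringInverse.isSelfAdjoint hd
    (TwoSidedIdeal.ringInverse_mem_commutantMod hs hsI) hρI htt

/-- Let `A` be a unital C*-algebra and `I` a closed two-sided ideal.
Let `d ∈ A` be self-adjoint, `ρ ∈ I` self-adjoint, set `a := d² + ρ`, and suppose
`a - κ₀·1` is positive for some real `κ₀ > 0`. Then `F := a^{-1/2}·d` is invertible
modulo `I` with parametrix `F` itself: `F·F - 1 ∈ I`, `F*·F - 1 ∈ I` and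
`F·F* - 1 ∈ I`. -/
theorem stmt9 {A : Type*} [CStarAlgebra A] [PartialOrder A] [StarOrderedRing A]
    (I : TwoSidedIdeal A) (hI : IsClosed (I : Set A))
    (d : A) (hd : IsSelfAdjoint d) (ρ : A) (hρI : ρ ∈ I) (hρ : IsSelfAdjoint ρ)
    (κ₀ : ℝ) (hκ : 0 < κ₀)
    (hpos : 0 ≤ d ^ 2 + ρ - κ₀ • (1 : A)) :
    (Ring.inverse (CFC.sqrt (d ^ 2 + ρ)) * d) *
        (Ring.inverse (CFC.sqrt (d ^ 2 + ρ)) * d) - 1 ∈ I ∧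
      star (Ring.inverse (CFC.sqrt (d ^ 2 + ρ)) * d) *
        (Ring.inverse (CFC.sqrt (d ^ 2 + ρ)) * d) - 1 ∈ I ∧
      (Ring.inverse (CFC.sqrt (d ^ 2 + ρ)) * d) *
        star (Ring.inverse (CFC.sqrt (d ^ 2 + ρ)) * d) - 1 ∈ I :=
  stmt9_general I hI d hd ρ hρI κ₀ hκ hpos
end

section
/- Let H be a complex Hilbert space, let G be a bounded operator on H, let c be a bounded self-adjoint operator on H, and let κ₀ > 0 be a real number such that ⟨c x, x⟩ ≥ κ₀ ‖x‖² for all x ∈ H. Set a := G* ∘ G + c. Then a is self-adjoint with ⟨a x, x⟩ ≥ κ₀ ‖x‖² for all x, a is invertible, and for every σ ∈ H one has ‖a^{-1/2} σ‖² + ‖G (a^{-1/2} σ)‖² ≤ (1 + 1/κ₀) ‖σ‖². -/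
open scoped InnerProductSpace

/-!
Writing `a = G* G + c`, the quadratic form of `a` is `‖G x‖² + re ⟪c x, x⟫ ≥ ‖G x‖² + κ₀ ‖x‖²`,
so `a` is coercive, hence strictly positive, and `a^{1/2}` is invertible. For
`y = a^{-1/2} σ` one has `re ⟪a y, y⟫ = ‖a^{1/2} y‖² = ‖σ‖²`, so `‖G y‖² + κ₀ ‖y‖² ≤ ‖σ‖²`,
which bounds `‖G y‖²` by `‖σ‖²` and `‖y‖²` by `‖σ‖² / κ₀`.
-/

theorem IsUnit.apply_ring_inverse_apply {F α : Type*} [MonoidWithZero F] [FunLike F α α]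
    [IsMulApplyEqComp F α] [IsOneApplyEqSelf F α] {b : F} (hb : IsUnit b) (x : α) :
    b (Ring.inverse b x) = x := by
  rw [← mul_apply_eq_comp, Ring.mul_inverse_cancel b hb, one_apply_eq_self]

namespace ContinuousLinearMap

section RCLike

variable {𝕜 H : Type*} [RCLike 𝕜] [NormedAddCommGroup H] [InnerProductSpace 𝕜 H]
  [CompleteSpace H]

open RCLike

theorem re_inner_star_mul_self_add_apply (G c : H →L[𝕜] H) (x : H) :
    re ⟪(star G * G + c) x, x⟫_𝕜 = ‖G x‖ ^ 2 + re ⟪c x, x⟫_𝕜 := by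
  rw [add_apply, inner_add_left, map_add, apply_norm_sq_eq_inner_adjoint_left, star_eq_adjoint,
    mul_def]

theorem isUnit_of_forall_mul_norm_sq_le_re_inner {a : H →L[𝕜] H} {κ : ℝ} (hκ : 0 < κ)
    (ha : ∀ x, κ * ‖x‖ ^ 2 ≤ re ⟪a x, x⟫_𝕜) : IsUnit a :=
  isUnit_of_forall_le_norm_inner_map a (c := ⟨κ, hκ.le⟩) hκ fun x =>
    (mul_comm _ _).trans_le <| (ha x).trans (re_le_norm _)

theorem isStrictlyPositive_of_forall_mul_norm_sq_le_re_inner {a : H →L[𝕜] H}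
    (hsa : IsSelfAdjoint a) {κ : ℝ} (hκ : 0 < κ) (ha : ∀ x, κ * ‖x‖ ^ 2 ≤ re ⟪a x, x⟫_𝕜) :
    IsStrictlyPositive a := by
  refine ⟨(nonneg_iff_isPositive a).mpr ⟨hsa.isSymmetric, fun x => ?_⟩,
    isUnit_of_forall_mul_norm_sq_le_re_inner hκ ha⟩
  exact (by positivity : 0 ≤ κ * ‖x‖ ^ 2).trans (ha x)

end RCLike

variable {H : Type*} [NormedAddCommGroup H] [InnerProductSpace ℂ H] [CompleteSpace H]

theorem re_inner_apply_eq_norm_sqrt_apply_sq {a : H →L[ℂ] H} (ha : 0 ≤ a) (x : H) :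
    (⟪a x, x⟫_ℂ).re = ‖CFC.sqrt a x‖ ^ 2 := by
  rw [apply_norm_sq_eq_inner_adjoint_left, ← star_eq_adjoint, (CFC.sqrt_nonneg a).isSelfAdjoint,
    ← mul_def, CFC.sqrt_mul_sqrt_self a ha, RCLike.re_to_complex]

theorem re_inner_apply_inverse_sqrt_apply {a : H →L[ℂ] H} (ha : IsStrictlyPositive a) (σ : H) :
    (⟪a (Ring.inverse (CFC.sqrt a) σ), Ring.inverse (CFC.sqrt a) σ⟫_ℂ).re = ‖σ‖ ^ 2 := by
  rw [re_inner_apply_eq_norm_sqrt_apply_sq ha.nonneg,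
    ha.isUnit_cfcSqrt.apply_ring_inverse_apply]

end ContinuousLinearMap

open ContinuousLinearMap in
/-- Let `H` be a complex Hilbert space, `G` a bounded operator on `H`,
`c` a bounded self-adjoint operator on `H` with `⟨c x, x⟩ ≥ κ₀‖x‖²` for all `x`, where
`κ₀ > 0` is real. Set `a := G* ∘ G + c`. Then `a` is self-adjoint with
`⟨a x, x⟩ ≥ κ₀‖x‖²` for all `x`, `a` is invertible, and for every `σ ∈ H`,
`‖a^{-1/2}σ‖² + ‖G (a^{-1/2}σ)‖² ≤ (1 + 1/κ₀)‖σ‖²`. -/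
theorem stmt11 {H : Type*} [NormedAddCommGroup H] [InnerProductSpace ℂ H] [CompleteSpace H]
    (G c : H →L[ℂ] H) (hc : IsSelfAdjoint c) (κ₀ : ℝ) (hκ : 0 < κ₀)
    (hcoercive : ∀ x : H, κ₀ * ‖x‖ ^ 2 ≤ (⟪c x, x⟫_ℂ).re) :
    IsSelfAdjoint (star G * G + c) ∧
      (∀ x : H, κ₀ * ‖x‖ ^ 2 ≤ (⟪(star G * G + c) x, x⟫_ℂ).re) ∧
      IsUnit (star G * G + c) ∧
      ∀ σ : H,
        ‖Ring.inverse (CFC.sqrt (star G * G + c)) σ‖ ^ 2 +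
            ‖G (Ring.inverse (CFC.sqrt (star G * G + c)) σ)‖ ^ 2 ≤
          (1 + 1 / κ₀) * ‖σ‖ ^ 2 := by
  have hsa : IsSelfAdjoint (star G * G + c) := (IsSelfAdjoint.star_mul_self G).add hc
  have hquad (x : H) :
      (⟪(star G * G + c) x, x⟫_ℂ).re = ‖G x‖ ^ 2 + (⟪c x, x⟫_ℂ).re :=
    re_inner_star_mul_self_add_apply G c x
  have hcoer (x : H) : κ₀ * ‖x‖ ^ 2 ≤ (⟪(star G * G + c) x, x⟫_ℂ).re := by
    linarith [hquad x, hcoercive x, sq_nonneg ‖G x‖]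
  have hpos := isStrictlyPositive_of_forall_mul_norm_sq_le_re_inner hsa hκ hcoer
  refine ⟨hsa, hcoer, hpos.isUnit, fun σ => ?_⟩
  set y := Ring.inverse (CFC.sqrt (star G * G + c)) σ
  have hσ : ‖G y‖ ^ 2 + κ₀ * ‖y‖ ^ 2 ≤ ‖σ‖ ^ 2 := by
    linarith [re_inner_apply_inverse_sqrt_apply hpos σ, hquad y, hcoercive y]
  have hy : ‖y‖ ^ 2 ≤ ‖σ‖ ^ 2 / κ₀ := by
    rw [le_div_iff₀ hκ]
    linarith [sq_nonneg ‖G y‖]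
  have hGy : ‖G y‖ ^ 2 ≤ ‖σ‖ ^ 2 := by linarith [mul_nonneg hκ.le (sq_nonneg ‖y‖)]
  calc ‖y‖ ^ 2 + ‖G y‖ ^ 2 ≤ ‖σ‖ ^ 2 / κ₀ + ‖σ‖ ^ 2 := add_le_add hy hGy
    _ = (1 + 1 / κ₀) * ‖σ‖ ^ 2 := by ring
end
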